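/- Let H be a real Hilbert space and let γ : [0,1] → H be a continuous path lying on the unit sphere of H with γ(1) = −γ(0). Then the energy of γ with respect to the norm metric satisfies E(γ) ≥ π². -/

import Mathlib

/-!
For unit vectors at angle `θ` the chord is `‖u - v‖ = 2 sin (θ / 2) ≥ θ cos (θ / 2)
= θ √(1 - ‖u - v‖² / 4)`. Angles obey the triangle inequality, so along any partition of a path
joining antipodal points they add up to at least `π`; on a fine uniform partition all chords are
at most `ε`, hence the inscribed polygon has length at least `π √(1 - ε² / 4)`. Cauchy–Schwarz
with `∑ Δtᵢ = 1` bounds the energy sum below by the square of that length.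
-/

open MeasureTheory Set Filter
open scoped ENNReal Real Topology

/-- `t 0 = 0 < t 1 < ... < t k = 1` is a finite partition of [0,1]. -/
def IsPartition (k : ℕ) (t : ℕ → ℝ) : Prop :=
  0 < k ∧ t 0 = 0 ∧ t k = 1 ∧ ∀ i < k, t i < t (i + 1)

/-- The energy of a path along partitions of [0,1], expressed in terms of the
squared-distance function `D s t` between the points `γ s` and `γ t` of the path:
`E = sup_Π Σ_i d(γ(t_i),γ(t_{i-1}))² / (t_i - t_{i-1})`. -/
noncomputable def energyOf (D : ℝ → ℝ → ℝ) : ℝ≥0∞ :=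
  ⨆ (k : ℕ) (t : ℕ → ℝ) (_ : IsPartition k t),
    ENNReal.ofReal (∑ i ∈ Finset.range k, D (t i) (t (i + 1)) / (t (i + 1) - t i))

theorem Real.mul_cos_le_sin {x : ℝ} (hx₀ : 0 ≤ x) (hx : x ≤ π / 2) :
    x * Real.cos x ≤ Real.sin x := by
  rcases hx.lt_or_eq with hlt | rfl
  · have hcos : 0 < Real.cos x := Real.cos_pos_of_mem_Ioo ⟨by linarith [Real.pi_pos], hlt⟩
    simpa [Real.tan_eq_sin_div_cos, le_div_iff₀ hcos] using Real.le_tan hx₀ hlt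
  · simp

namespace InnerProductGeometry

variable {V : Type*} [NormedAddCommGroup V] [InnerProductSpace ℝ V]

theorem norm_sub_eq_two_mul_sin_angle_div_two {u v : V} (hu : ‖u‖ = 1) (hv : ‖v‖ = 1) :
    ‖u - v‖ = 2 * Real.sin (angle u v / 2) := by
  have hsin : 0 ≤ Real.sin (angle u v / 2) :=
    Real.sin_nonneg_of_nonneg_of_le_pi (by linarith [angle_nonneg u v])
      (by linarith [angle_le_pi u v, Real.pi_pos])
  have hcos : Real.cos (angle u v) = 1 - 2 * Real.sin (angle u v / 2) ^ 2 := by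
    rw [← mul_div_cancel₀ (angle u v) two_ne_zero, Real.cos_two_mul, Real.cos_sq']
    ring_nf
  refine (pow_left_inj₀ (norm_nonneg _) (by positivity) two_ne_zero).mp ?_
  have hcos_law := norm_sub_sq_eq_norm_sq_add_norm_sq_sub_two_mul_norm_mul_norm_mul_cos_angle u v
  rw [hu, hv, hcos] at hcos_law
  linear_combination hcos_law

theorem angle_mul_sqrt_le_norm_sub {u v : V} (hu : ‖u‖ = 1) (hv : ‖v‖ = 1) :
    angle u v * √(1 - ‖u - v‖ ^ 2 / 4) ≤ ‖u - v‖ := by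
  rw [norm_sub_eq_two_mul_sin_angle_div_two hu hv]
  set x := angle u v / 2 with hx
  have hx₀ : 0 ≤ x := by linarith [angle_nonneg u v]
  have hxπ : x ≤ π / 2 := by linarith [angle_le_pi u v]
  have hcos : √(1 - (2 * Real.sin x) ^ 2 / 4) = Real.cos x := by
    rw [show 1 - (2 * Real.sin x) ^ 2 / 4 = Real.cos x ^ 2 by rw [Real.cos_sq']; ring,
      Real.sqrt_sq (Real.cos_nonneg_of_mem_Icc ⟨by linarith, hxπ⟩)]
  rw [hcos, show angle u v = 2 * x by rw [hx]; ring, mul_assoc]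
  exact mul_le_mul_of_nonneg_left (Real.mul_cos_le_sin hx₀ hxπ) zero_le_two

theorem angle_le_sum_angle (u : ℕ → V) (h₀ : u 0 ≠ 0) (k : ℕ) :
    angle (u 0) (u k) ≤ ∑ i ∈ Finset.range k, angle (u i) (u (i + 1)) := by
  induction k with
  | zero => simp [angle_self h₀]
  | succ k ih =>
    rw [Finset.sum_range_succ]
    exact (angle_le_angle_add_angle _ (u k) _).trans (add_le_add_left ih _)

theorem pi_mul_sqrt_le_sum_norm_sub {u : ℕ → V} {k : ℕ} {ε : ℝ} (hu : ∀ i ≤ k, ‖u i‖ = 1)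
    (hk : u k = -u 0) (hε : ∀ i < k, ‖u i - u (i + 1)‖ ≤ ε) :
    π * √(1 - ε ^ 2 / 4) ≤ ∑ i ∈ Finset.range k, ‖u i - u (i + 1)‖ := by
  have h₀ : u 0 ≠ 0 := norm_ne_zero_iff.mp (by simp [hu 0 (Nat.zero_le k)])
  have hπ : π ≤ ∑ i ∈ Finset.range k, angle (u i) (u (i + 1)) := by
    simpa [hk, angle_self_neg_of_nonzero h₀] using angle_le_sum_angle u h₀ k
  calc π * √(1 - ε ^ 2 / 4)
      ≤ (∑ i ∈ Finset.range k, angle (u i) (u (i + 1))) * √(1 - ε ^ 2 / 4) :=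
        mul_le_mul_of_nonneg_right hπ (Real.sqrt_nonneg _)
    _ = ∑ i ∈ Finset.range k, angle (u i) (u (i + 1)) * √(1 - ε ^ 2 / 4) := Finset.sum_mul ..
    _ ≤ ∑ i ∈ Finset.range k, angle (u i) (u (i + 1)) * √(1 - ‖u i - u (i + 1)‖ ^ 2 / 4) := by
        refine Finset.sum_le_sum fun i hi => ?_
        have := angle_nonneg (u i) (u (i + 1))
        have := hε i (Finset.mem_range.mp hi)
        gcongr
    _ ≤ ∑ i ∈ Finset.range k, ‖u i - u (i + 1)‖ := by
        refine Finset.sum_le_sum fun i hi => ?_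
        have hi := Finset.mem_range.mp hi
        exact angle_mul_sqrt_le_norm_sub (hu i hi.le) (hu (i + 1) hi)

end InnerProductGeometry

theorem natCast_div_mem_Icc {i k : ℕ} (hi : i ≤ k) : (i : ℝ) / k ∈ Icc (0 : ℝ) 1 :=
  ⟨by positivity, div_le_one_of_le₀ (by exact_mod_cast hi) (by positivity)⟩

theorem isPartition_div {k : ℕ} (hk : 0 < k) : IsPartition k (fun i => i / k) := by
  have hk' : (0 : ℝ) < k := Nat.cast_pos.mpr hk
  refine ⟨hk, by simp, div_self hk'.ne', fun i _ => ?_⟩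
  dsimp only
  gcongr
  exact_mod_cast i.lt_succ_self

namespace IsPartition

variable {k : ℕ} {t : ℕ → ℝ}

theorem sum_sub (h : IsPartition k t) : ∑ i ∈ Finset.range k, (t (i + 1) - t i) = 1 := by
  rw [Finset.sum_range_sub, h.2.2.1, h.2.1, sub_zero]

theorem sq_sum_le_sum_sq_div (h : IsPartition k t) (a : ℕ → ℝ) :
    (∑ i ∈ Finset.range k, a i) ^ 2 ≤ ∑ i ∈ Finset.range k, a i ^ 2 / (t (i + 1) - t i) := by
  simpa [h.sum_sub] using Finset.sq_sum_div_le_sum_sq_div (Finset.range k) a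
    fun i hi => sub_pos.mpr (h.2.2.2 i (Finset.mem_range.mp hi))

theorem ofReal_sq_sum_dist_le_energyOf {X : Type*} [PseudoMetricSpace X] (h : IsPartition k t)
    (γ : ℝ → X) :
    ENNReal.ofReal ((∑ i ∈ Finset.range k, dist (γ (t i)) (γ (t (i + 1)))) ^ 2) ≤
      energyOf (fun s t => dist (γ s) (γ t) ^ 2) :=
  le_iSup_of_le k <| le_iSup_of_le t <| le_iSup_of_le h <|
    ENNReal.ofReal_le_ofReal (h.sq_sum_le_sum_sq_div _)

end IsPartition

theorem ContinuousOn.exists_dist_div_le {X : Type*} [PseudoMetricSpace X] {γ : ℝ → X}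
    (hγ : ContinuousOn γ (Icc 0 1)) {ε : ℝ} (hε : 0 < ε) :
    ∃ k : ℕ, 0 < k ∧ ∀ i < k, dist (γ (i / k)) (γ ((i + 1 : ℕ) / k)) ≤ ε := by
  obtain ⟨δ, hδ, hγδ⟩ := Metric.uniformContinuousOn_iff.mp
    (isCompact_Icc.uniformContinuousOn_of_continuous hγ) ε hε
  obtain ⟨n, hn⟩ := exists_nat_one_div_lt hδ
  refine ⟨n + 1, n.succ_pos, fun i hi =>
    (hγδ _ (natCast_div_mem_Icc hi.le) _ (natCast_div_mem_Icc hi) ?_).le⟩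
  rw [dist_comm, Real.dist_eq, ← sub_div]
  push_cast
  rwa [add_sub_cancel_left, abs_of_pos (by positivity)]

open InnerProductGeometry in
theorem exists_isPartition_lt_sum_dist {H : Type*} [NormedAddCommGroup H] [InnerProductSpace ℝ H]
    {γ : ℝ → H} (hcont : ContinuousOn γ (Icc 0 1)) (hsph : ∀ t ∈ Icc (0:ℝ) 1, ‖γ t‖ = 1)
    (hant : γ 1 = -γ 0) {L : ℝ} (hL : L < π) :
    ∃ k t, IsPartition k t ∧ L < ∑ i ∈ Finset.range k, dist (γ (t i)) (γ (t (i + 1))) := by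
  have hlim : Tendsto (fun ε : ℝ => π * √(1 - ε ^ 2 / 4)) (𝓝[>] 0) (𝓝 π) := by
    have : Continuous fun ε : ℝ => π * √(1 - ε ^ 2 / 4) := by fun_prop
    simpa using (this.tendsto 0).mono_left nhdsWithin_le_nhds
  obtain ⟨ε, hLε, hε⟩ := ((hlim.eventually (lt_mem_nhds hL)).and self_mem_nhdsWithin).exists
  obtain ⟨k, hk, hγk⟩ := hcont.exists_dist_div_le hε
  have hpart := isPartition_div hk
  refine ⟨k, _, hpart, hLε.trans_le ?_⟩
  simp only [dist_eq_norm]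
  refine pi_mul_sqrt_le_sum_norm_sub (fun i hi => hsph _ ?_) ?_ fun i hi => ?_
  · exact natCast_div_mem_Icc hi
  · simpa [show (k : ℝ) / k = 1 from hpart.2.2.1] using hant
  · simpa [dist_eq_norm] using hγk i hi

/-- a continuous path on the unit sphere of a real Hilbert space between
two antipodal points has energy at least π². -/
theorem hilbert_sphere_path_energy_ge
    {H : Type*} [NormedAddCommGroup H] [InnerProductSpace ℝ H]
    (γ : ℝ → H) (hcont : ContinuousOn γ (Icc 0 1))
    (hsph : ∀ t ∈ Icc (0:ℝ) 1, ‖γ t‖ = 1)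
    (hant : γ 1 = -γ 0) :
    ENNReal.ofReal (π ^ 2) ≤ energyOf (fun s t => dist (γ s) (γ t) ^ 2) := by
  refine le_of_forall_lt fun c hc => ?_
  have hc_top : c ≠ ⊤ := (hc.trans ENNReal.ofReal_lt_top).ne
  have hcπ : c.toReal < π ^ 2 := (ENNReal.toReal_lt_of_lt_ofReal hc)
  obtain ⟨k, t, ht, hlt⟩ := exists_isPartition_lt_sum_dist hcont hsph hant
    ((Real.sqrt_lt' Real.pi_pos).mpr hcπ)
  calc c = ENNReal.ofReal (√c.toReal ^ 2) := by
        rw [Real.sq_sqrt ENNReal.toReal_nonneg, ENNReal.ofReal_toReal hc_top]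
    _ < ENNReal.ofReal ((∑ i ∈ Finset.range k, dist (γ (t i)) (γ (t (i + 1)))) ^ 2) := by
        have hsq := pow_lt_pow_left₀ hlt (Real.sqrt_nonneg _) two_ne_zero
        exact ENNReal.ofReal_lt_ofReal_iff'.mpr ⟨hsq, (sq_nonneg _).trans_lt hsq⟩
    _ ≤ _ := ht.ofReal_sq_sum_dist_le_energyOf γ
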